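/- arXiv:1903.09933 — 8 statements merged into one kernel-verified Lean document; each statement's English description precedes it below -/
import Mathlib

section
/- Let D be a digraph and let a = (u,v) be an arc of D. If the digraph D − a obtained from D by deleting the arc a is ℝ^d-realizable, then D is ℝ^{d+2}-realizable. Consequently dim(D) ≤ dim(D − a) + 2. -/
open Classical in
lemma natCard_subtype {n : ℕ} (P : Fin n → Prop) :
    Nat.card {i : Fin n // P i} = ∑ i : Fin n, if P i then 1 else 0 := by
  classical
  rw [Nat.card_eq_fintype_card, Fintype.card_subtype, Finset.card_filter]

open Classical in
lemma count_append {d : ℕ} (x y : Fin d → ℝ) (a b : Fin 2 → ℝ) :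
    Nat.card {i : Fin (d+2) // Fin.append x a i < Fin.append y b i} =
    Nat.card {i : Fin d // x i < y i} + Nat.card {j : Fin 2 // a j < b j} := by
  classical
  rw [natCard_subtype, natCard_subtype, natCard_subtype, Fin.sum_univ_add]
  simp [Fin.append_left, Fin.append_right]

open Classical in
lemma card2 (a b : Fin 2 → ℝ) :
    Nat.card {j : Fin 2 // a j < b j} =
      (if a 0 < b 0 then 1 else 0) + (if a 1 < b 1 then 1 else 0) := by
  classical
  rw [natCard_subtype, Fin.sum_univ_two]



/-- A digraph on vertex set `V`: an asymmetric arc relation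
(no loops, no pairs of opposite arcs, so the underlying graph is simple). -/
structure WDigraph (V : Type*) where
  Adj : V → V → Prop
  asymm : ∀ u v, Adj u v → ¬ Adj v u

/-- The weak majority relation on `ℝ^d`:
`weakMaj x y` means `x ≻ y`, i.e. `|{i : x i > y i}| > |{i : y i > x i}|`. -/
def weakMaj {d : ℕ} (x y : Fin d → ℝ) : Prop :=
  Nat.card {i : Fin d // x i < y i} < Nat.card {i : Fin d // y i < x i}

/-- `D` is `ℝ^d`-realizable: there is `f : V → ℝ^d` with
`(u,v) ∈ A(D)` iff `f u ≻ f v`. -/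
def Realizable {V : Type*} (D : WDigraph V) (d : ℕ) : Prop :=
  ∃ f : V → Fin d → ℝ, ∀ u v, D.Adj u v ↔ weakMaj (f u) (f v)

/-- The weak majority dimension of a digraph. -/
noncomputable def wdim {V : Type*} (D : WDigraph V) : ℕ :=
  sInf {d : ℕ | Realizable D d}

/-- The digraph obtained from `D` by deleting the arc `(u,v)`. -/
def WDigraph.deleteArc {V : Type*} (D : WDigraph V) (u v : V) : WDigraph V where
  Adj x y := D.Adj x y ∧ ¬ (x = u ∧ y = v)
  asymm := fun x y h h' => D.asymm x y h.1 h'.1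

/-- If `D - a` is `ℝ^d`-realizable for an arc `a = (u,v)` of `D`, then `D` is
`ℝ^{d+2}`-realizable; consequently `dim D ≤ dim (D - a) + 2`. -/
theorem stmt_3 {V : Type*} (D : WDigraph V) (u v : V) (huv : D.Adj u v) :
    (∀ d : ℕ, Realizable (D.deleteArc u v) d → Realizable D (d + 2)) ∧
    ((∃ d, Realizable (D.deleteArc u v) d) →
      wdim D ≤ wdim (D.deleteArc u v) + 2) := by
  classical
  have hne : u ≠ v := by
    rintro rfl; exact D.asymm u u huv huv
  have key : ∀ d : ℕ, Realizable (D.deleteArc u v) d → Realizable D (d + 2) := by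
    intro d ⟨f, hf⟩
    set e : V → Fin 2 → ℝ :=
      fun w => if w = u then ![1,1] else if w = v then ![0,0] else ![2,-2] with he
    refine ⟨fun w => Fin.append (f w) (e w), fun x y => ?_⟩
    have Nfuv : Nat.card {i : Fin d // f u i < f v i}
        = Nat.card {i : Fin d // f v i < f u i} := by
      have h1 : ¬ (D.deleteArc u v).Adj u v := fun h => h.2 ⟨rfl, rfl⟩
      have h2 : ¬ (D.deleteArc u v).Adj v u := fun h => D.asymm u v huv h.1
      rw [hf] at h1; rw [hf] at h2
      unfold weakMaj at h1 h2
      omega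
    unfold weakMaj
    rw [count_append, count_append]
    by_cases hxy : x = u ∧ y = v
    · obtain ⟨rfl, rfl⟩ := hxy
      have : Nat.card {j : Fin 2 // e x j < e y j} = 0 ∧
          Nat.card {j : Fin 2 // e y j < e x j} = 2 := by
        rw [card2, card2]
        simp only [he, if_pos rfl, if_neg hne, if_neg (Ne.symm hne)]
        norm_num
      rw [this.1, this.2, Nfuv]
      simp [huv]
    · by_cases hyx : x = v ∧ y = u
      · obtain ⟨rfl, rfl⟩ := hyx
        have : Nat.card {j : Fin 2 // e x j < e y j} = 2 ∧
            Nat.card {j : Fin 2 // e y j < e x j} = 0 := by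
          rw [card2, card2]
          simp only [he, if_pos rfl, if_neg hne, if_neg (Ne.symm hne)]
          norm_num
        rw [this.1, this.2, Nfuv]
        have : ¬ D.Adj x y := fun h => D.asymm _ _ huv h
        simp [this]
      · have hc : Nat.card {j : Fin 2 // e x j < e y j}
            = Nat.card {j : Fin 2 // e y j < e x j} := by
          rw [card2, card2]
          simp only [he]
          by_cases hx1 : x = u <;> by_cases hy1 : y = u <;>
            by_cases hx2 : x = v <;> by_cases hy2 : y = v <;>
            simp_all <;> norm_num
        have hAdj : D.Adj x y ↔ (D.deleteArc u v).Adj x y := by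
          constructor
          · exact fun h => ⟨h, hxy⟩
          · exact fun h => h.1
        rw [hAdj, hf, hc]
        unfold weakMaj
        omega
  refine ⟨key, fun ⟨d, hd⟩ => ?_⟩
  have hmem : Realizable (D.deleteArc u v) (wdim (D.deleteArc u v)) :=
    Nat.sInf_mem (⟨d, hd⟩ : Set.Nonempty {d | Realizable (D.deleteArc u v) d})
  exact Nat.sInf_le (key _ hmem)
end

section
/- Let k ≥ 2 and let D_1, …, D_k be pairwise vertex-disjoint finite digraphs, each of which is ℝ^d-realizable for some positive integer d. Then the disjoint union D_1 ∪ ⋯ ∪ D_k (with vertex set the union of the V(D_i) and arc set the union of the A(D_i)) is ℝ^{2⌊(d+1)/2⌋}-realizable. -/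
/-- The disjoint union of a family of vertex-disjoint digraphs: the vertex set is
the disjoint union of the vertex sets, and the arc set is the union of the arc sets. -/
def sigmaUnion {ι : Type*} {V : ι → Type*} (D : ∀ i, WDigraph (V i)) :
    WDigraph (Σ i, V i) where
  Adj x y := ∃ h : x.1 = y.1, (D y.1).Adj (h ▸ x.2) y.2
  asymm := by
    rintro ⟨i, u⟩ ⟨j, v⟩ h1 h2
    obtain ⟨e1, a1⟩ := h1
    obtain ⟨e2, a2⟩ := h2
    dsimp at e1 e2 a1 a2
    subst e1
    exact (D i).asymm u v a1 a2


/-- Padding a vector of `Fin d` to `Fin d'` with zeros, after squashing via `arctan`. -/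
noncomputable def padA (d d' : ℕ) (x : Fin d → ℝ) : Fin d' → ℝ :=
  fun j => if h : (j : ℕ) < d then Real.arctan (x ⟨j, h⟩) else 0

lemma padA_bound (d d' : ℕ) (x : Fin d → ℝ) (j : Fin d') : |padA d d' x j| < 2 := by
  unfold padA
  have hpi : Real.pi ≤ 4 := Real.pi_le_four
  split
  · have h1 := Real.arctan_lt_pi_div_two (x ⟨j, ‹_›⟩)
    have h2 := Real.neg_pi_div_two_lt_arctan (x ⟨j, ‹_›⟩)
    rw [abs_lt]; constructor <;> linarith
  · simp

lemma card_lt_padA (d d' : ℕ) (hdd : d ≤ d') (x y : Fin d → ℝ) :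
    Nat.card {j : Fin d' // padA d d' x j < padA d d' y j}
      = Nat.card {j : Fin d // x j < y j} := by
  have key : ∀ j : Fin d', (padA d d' x j < padA d d' y j) ↔
      ∃ h : (j : ℕ) < d, x ⟨j, h⟩ < y ⟨j, h⟩ := by
    intro j
    unfold padA
    by_cases h : (j : ℕ) < d
    · simp only [dif_pos h]
      rw [Real.arctan_strictMono.lt_iff_lt]
      exact ⟨fun hh => ⟨h, hh⟩, fun ⟨_, hh⟩ => hh⟩
    · simp [dif_neg h, h]
  rw [Nat.card_congr (Equiv.subtypeEquivRight key)]
  apply Nat.card_congr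
  exact { toFun := fun j => ⟨⟨j.1, j.2.choose⟩, j.2.choose_spec⟩
          invFun := fun j => ⟨⟨j.1, lt_of_lt_of_le j.1.2 hdd⟩, j.1.2, j.2⟩
          left_inv := fun j => rfl
          right_inv := fun j => rfl }

lemma weakMaj_padA (d d' : ℕ) (hdd : d ≤ d') (x y : Fin d → ℝ) :
    weakMaj (padA d d' x) (padA d d' y) ↔ weakMaj x y := by
  unfold weakMaj
  rw [card_lt_padA d d' hdd x y, card_lt_padA d d' hdd y x]

lemma weakMaj_add_right {n : ℕ} (o x y : Fin n → ℝ) :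
    weakMaj (fun j => x j + o j) (fun j => y j + o j) ↔ weakMaj x y := by
  unfold weakMaj
  rw [Nat.card_congr (Equiv.subtypeEquivRight fun j => add_lt_add_iff_right (o j)),
    Nat.card_congr (Equiv.subtypeEquivRight fun j => add_lt_add_iff_right (o j))]

lemma card_fin_lt (m : ℕ) : Nat.card {j : Fin (2*m) // (j : ℕ) < m} = m := by
  have e : {j : Fin (2*m) // (j : ℕ) < m} ≃ Fin m :=
    { toFun := fun j => ⟨j.1, j.2⟩
      invFun := fun j => ⟨⟨j.1, by omega⟩, j.2⟩
      left_inv := fun j => rfl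
      right_inv := fun j => rfl }
  rw [Nat.card_congr e]; simp

lemma card_fin_not_lt (m : ℕ) : Nat.card {j : Fin (2*m) // ¬ (j : ℕ) < m} = m := by
  have e : {j : Fin (2*m) // ¬ (j : ℕ) < m} ≃ Fin m :=
    { toFun := fun j => ⟨(j.1 : ℕ) - m, by obtain ⟨⟨v, hv⟩, hj⟩ := j; simp at hj ⊢; omega⟩
      invFun := fun j => ⟨⟨(j : ℕ) + m, by omega⟩, show ¬ ((j : ℕ) + m) < m by omega⟩
      left_inv := fun j => by
        obtain ⟨⟨v, hv⟩, hj⟩ := j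
        simp at hj
        apply Subtype.ext; apply Fin.ext; simp; omega
      right_inv := fun j => by
        apply Fin.ext
        show ((j : ℕ) + m) - m = (j : ℕ)
        omega }
  rw [Nat.card_congr e]; simp

lemma cross_card_lt (m : ℕ) (x y : Fin (2*m) → ℝ) (hx : ∀ j, |x j| < 2)
    (hy : ∀ j, |y j| < 2) (s t : ℝ) (hst : s + 4 ≤ t) :
    Nat.card {j : Fin (2*m) // x j + (if (j : ℕ) < m then s else -s) <
        y j + (if (j : ℕ) < m then t else -t)} = m := by
  have key : ∀ j : Fin (2*m), (x j + (if (j : ℕ) < m then s else -s) <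
      y j + (if (j : ℕ) < m then t else -t)) ↔ (j : ℕ) < m := by
    intro j
    have h1 := abs_lt.mp (hx j)
    have h2 := abs_lt.mp (hy j)
    obtain ⟨h1a, h1b⟩ := h1
    obtain ⟨h2a, h2b⟩ := h2
    by_cases h : (j : ℕ) < m
    · simp only [if_pos h]
      exact iff_of_true (by linarith) h
    · simp only [if_neg h]
      exact iff_of_false (by intro hc; linarith) h
  rw [Nat.card_congr (Equiv.subtypeEquivRight key)]
  exact card_fin_lt m

lemma cross_card_gt (m : ℕ) (x y : Fin (2*m) → ℝ) (hx : ∀ j, |x j| < 2)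
    (hy : ∀ j, |y j| < 2) (s t : ℝ) (hst : s + 4 ≤ t) :
    Nat.card {j : Fin (2*m) // y j + (if (j : ℕ) < m then t else -t) <
        x j + (if (j : ℕ) < m then s else -s)} = m := by
  have key : ∀ j : Fin (2*m), (y j + (if (j : ℕ) < m then t else -t) <
      x j + (if (j : ℕ) < m then s else -s)) ↔ ¬ (j : ℕ) < m := by
    intro j
    have h1 := abs_lt.mp (hx j)
    have h2 := abs_lt.mp (hy j)
    obtain ⟨h1a, h1b⟩ := h1
    obtain ⟨h2a, h2b⟩ := h2
    by_cases h : (j : ℕ) < m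
    · simp only [if_pos h]
      exact iff_of_false (by intro hc; linarith) (not_not_intro h)
    · simp only [if_neg h]
      exact iff_of_true (by linarith) h
  rw [Nat.card_congr (Equiv.subtypeEquivRight key)]
  exact card_fin_not_lt m


/-- For `k ≥ 2` pairwise vertex-disjoint finite digraphs `D_1, …, D_k`, each
`ℝ^d`-realizable for a positive integer `d`, the disjoint union
`D_1 ∪ ⋯ ∪ D_k` is `ℝ^{2⌊(d+1)/2⌋}`-realizable. -/

theorem stmt_5 (k : ℕ) (hk : 2 ≤ k) {V : Fin k → Type*} [∀ i, Fintype (V i)]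
    (D : ∀ i, WDigraph (V i)) (d : ℕ) (hd : 0 < d)
    (h : ∀ i, Realizable (D i) d) :
    Realizable (sigmaUnion D) (2 * ((d + 1) / 2)) := by
  classical
  set m := (d + 1) / 2 with hm
  have hdm : d ≤ 2 * m := by omega
  choose f hf using h
  refine ⟨fun p => fun j => padA d (2*m) (f p.1 p.2) j +
      (if (j : ℕ) < m then (4 * ((p.1 : ℕ) : ℝ)) else -(4 * ((p.1 : ℕ) : ℝ))), ?_⟩
  rintro ⟨a, ua⟩ ⟨b, vb⟩
  by_cases hab : a = b
  · subst hab
    have key : weakMaj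
        (fun j => padA d (2*m) (f a ua) j +
          (if (j : ℕ) < m then (4 * ((a : ℕ) : ℝ)) else -(4 * ((a : ℕ) : ℝ))))
        (fun j => padA d (2*m) (f a vb) j +
          (if (j : ℕ) < m then (4 * ((a : ℕ) : ℝ)) else -(4 * ((a : ℕ) : ℝ))))
        ↔ weakMaj (f a ua) (f a vb) :=
      (weakMaj_add_right _ _ _).trans (weakMaj_padA d (2*m) hdm _ _)
    constructor
    · rintro ⟨hh, adj⟩
      exact key.mpr ((hf a ua vb).mp adj)
    · intro hw
      exact ⟨rfl, (hf a ua vb).mpr (key.mp hw)⟩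
  · constructor
    · rintro ⟨hh, -⟩
      exact absurd hh hab
    · intro hw
      exfalso
      have hne : (a : ℕ) ≠ (b : ℕ) := fun hh => hab (Fin.ext hh)
      unfold weakMaj at hw
      beta_reduce at hw
      rcases lt_or_gt_of_ne hne with hlt | hgt
      · have hst : 4 * ((a : ℕ) : ℝ) + 4 ≤ 4 * ((b : ℕ) : ℝ) := by
          have : ((a : ℕ) : ℝ) + 1 ≤ ((b : ℕ) : ℝ) := by exact_mod_cast hlt
          linarith
        rw [cross_card_lt m _ _ (padA_bound d (2*m) (f a ua)) (padA_bound d (2*m) (f b vb))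
              _ _ hst,
            cross_card_gt m _ _ (padA_bound d (2*m) (f a ua)) (padA_bound d (2*m) (f b vb))
              _ _ hst] at hw
        exact lt_irrefl m hw
      · have hst : 4 * ((b : ℕ) : ℝ) + 4 ≤ 4 * ((a : ℕ) : ℝ) := by
          have : ((b : ℕ) : ℝ) + 1 ≤ ((a : ℕ) : ℝ) := by exact_mod_cast hgt
          linarith
        rw [cross_card_gt m _ _ (padA_bound d (2*m) (f b vb)) (padA_bound d (2*m) (f a ua))
              _ _ hst,
            cross_card_lt m _ _ (padA_bound d (2*m) (f b vb)) (padA_bound d (2*m) (f a ua))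
              _ _ hst] at hw
        exact lt_irrefl m hw
end

section
/- For every positive integer d there exists a finite transitive digraph D that is not ℝ^d-realizable; consequently dim(D) > d. (One such digraph has vertex set [r] ∪ {S ⊆ [r] : |S| = d+1} with r = (2d)^{2^{d-1}} + 1 and arc set {(i, S) : i ∈ S, S ⊆ [r], |S| = d+1}.) -/
open Finset


open Finset

/-- The finset of `rel`-chains (w.r.t. values of `g`) ending at `i`. -/
noncomputable def chSet {M : ℕ} (g : Fin M → ℝ) (rel : ℝ → ℝ → Prop) (i : Fin M) :
    Finset (Finset (Fin M)) := by
  classical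
  exact Finset.univ.filter
    (fun s : Finset (Fin M) =>
      (∀ a ∈ s, ∀ b ∈ s, a < b → rel (g a) (g b)) ∧ i ∈ s ∧ ∀ a ∈ s, a ≤ i)

lemma mem_chSet {M : ℕ} {g : Fin M → ℝ} {rel : ℝ → ℝ → Prop} {i : Fin M}
    {s : Finset (Fin M)} :
    s ∈ chSet g rel i ↔
      (∀ a ∈ s, ∀ b ∈ s, a < b → rel (g a) (g b)) ∧ i ∈ s ∧ ∀ a ∈ s, a ≤ i := by
  classical
  simp [chSet]

/-- Length of the longest `rel`-chain ending at `i`. -/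
noncomputable def chLen {M : ℕ} (g : Fin M → ℝ) (rel : ℝ → ℝ → Prop) (i : Fin M) : ℕ :=
  (chSet g rel i).sup Finset.card

lemma singleton_mem_chSet {M : ℕ} (g : Fin M → ℝ) (rel : ℝ → ℝ → Prop) (i : Fin M) :
    {i} ∈ chSet g rel i := by
  rw [mem_chSet]
  refine ⟨?_, by simp, by simp⟩
  intro a ha b hb hab
  simp only [Finset.mem_singleton] at ha hb
  subst ha; subst hb; exact absurd hab (lt_irrefl _)

lemma one_le_chLen {M : ℕ} (g : Fin M → ℝ) (rel : ℝ → ℝ → Prop) (i : Fin M) :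
    1 ≤ chLen g rel i := by
  have h := Finset.le_sup (f := Finset.card) (singleton_mem_chSet g rel i)
  rw [Finset.card_singleton] at h
  exact h

lemma chLen_lt_chLen {M : ℕ} {g : Fin M → ℝ} {rel : ℝ → ℝ → Prop}
    (htr : Transitive rel) {i j : Fin M} (hij : i < j) (hrel : rel (g i) (g j)) :
    chLen g rel i < chLen g rel j := by
  obtain ⟨s, hs, hcard⟩ := Finset.exists_mem_eq_sup (chSet g rel i)
    ⟨{i}, singleton_mem_chSet g rel i⟩ Finset.card
  rw [mem_chSet] at hs
  obtain ⟨hchain, hi, hle⟩ := hs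
  have hj : j ∉ s := fun h => absurd (hle j h) (not_le.mpr hij)
  have hmem : insert j s ∈ chSet g rel j := by
    rw [mem_chSet]
    refine ⟨?_, Finset.mem_insert_self _ _, ?_⟩
    · intro a ha b hb hab
      rcases Finset.mem_insert.mp ha with ha' | ha'
      · subst ha'
        rcases Finset.mem_insert.mp hb with hb' | hb'
        · subst hb'; exact absurd hab (lt_irrefl _)
        · exact absurd (lt_of_lt_of_le hab (le_trans (hle b hb') (le_of_lt hij)))
            (lt_irrefl _)
      · rcases Finset.mem_insert.mp hb with hb' | hb'
        · subst hb'
          rcases lt_or_eq_of_le (hle a ha') with h | h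
          · exact htr (hchain a ha' i hi h) hrel
          · rw [show a = i from h]; exact hrel
        · exact hchain a ha' b hb' hab
    · intro a ha
      rcases Finset.mem_insert.mp ha with ha' | ha'
      · subst ha'; exact le_refl _
      · exact le_trans (hle a ha') (le_of_lt hij)
  have := Finset.le_sup (f := Finset.card) hmem
  rw [Finset.card_insert_of_notMem hj] at this
  unfold chLen
  omega

lemma chLen_big {M n : ℕ} {g : Fin M → ℝ} {rel : ℝ → ℝ → Prop} {i : Fin M}
    (h : n ≤ chLen g rel i) :
    ∃ φ : Fin n → Fin M, StrictMono φ ∧ ∀ a b : Fin n, a < b → rel (g (φ a)) (g (φ b)) := by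
  obtain ⟨s, hs, hcard⟩ := Finset.exists_mem_eq_sup (chSet g rel i)
    ⟨{i}, singleton_mem_chSet g rel i⟩ Finset.card
  rw [mem_chSet] at hs
  have h' : n ≤ (chSet g rel i).sup Finset.card := h
  rw [hcard] at h'
  have hn : n ≤ s.card := h'
  obtain ⟨t, hts, htcard⟩ := Finset.exists_subset_card_eq hn
  refine ⟨fun a => (t.orderIsoOfFin htcard a : Fin M), ?_, ?_⟩
  · intro a b hab
    exact Subtype.coe_lt_coe.mpr ((t.orderIsoOfFin htcard).strictMono hab)
  · intro a b hab
    exact hs.1 _ (hts (t.orderIsoOfFin htcard a).2) _ (hts (t.orderIsoOfFin htcard b).2)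
      (Subtype.coe_lt_coe.mpr ((t.orderIsoOfFin htcard).strictMono hab))

lemma oneDim {M n : ℕ} (hM : n ^ 3 < M) (g : Fin M → ℝ) :
    ∃ φ : Fin n → Fin M, StrictMono φ ∧
      ((∀ i j : Fin n, i < j → g (φ i) < g (φ j)) ∨
       (∀ i j : Fin n, i < j → g (φ j) < g (φ i)) ∨
       (∀ i j : Fin n, i < j → g (φ i) = g (φ j))) := by
  classical
  rcases Nat.eq_zero_or_pos n with hn | hn
  · subst hn
    exact ⟨fun i => i.elim0, fun a => a.elim0, Or.inl fun i => i.elim0⟩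
  by_cases h1 : ∃ i, n ≤ chLen g (· < ·) i
  · obtain ⟨i, hi⟩ := h1
    obtain ⟨φ, h1, h2⟩ := chLen_big hi
    exact ⟨φ, h1, Or.inl h2⟩
  by_cases h2 : ∃ i, n ≤ chLen g (fun a b => b < a) i
  · obtain ⟨i, hi⟩ := h2
    obtain ⟨φ, ha, hb⟩ := chLen_big hi
    exact ⟨φ, ha, Or.inr (Or.inl hb)⟩
  by_cases h3 : ∃ i, n ≤ chLen g (· = ·) i
  · obtain ⟨i, hi⟩ := h3
    obtain ⟨φ, ha, hb⟩ := chLen_big hi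
    exact ⟨φ, ha, Or.inr (Or.inr hb)⟩
  exfalso
  push_neg at h1 h2 h3
  set L1 := chLen g (· < ·)
  set L2 := chLen g (fun a b => b < a)
  set L3 := chLen g (· = ·)
  have hF : ∀ i, L1 i - 1 < n ∧ L2 i - 1 < n ∧ L3 i - 1 < n := by
    intro i
    have := h1 i; have := h2 i; have := h3 i
    omega
  set F : Fin M → Fin n × Fin n × Fin n := fun i =>
    (⟨L1 i - 1, (hF i).1⟩, ⟨L2 i - 1, (hF i).2.1⟩, ⟨L3 i - 1, (hF i).2.2⟩) with hFdef
  have key : ∀ a b : Fin M, a < b → F a ≠ F b := by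
    intro a b hab hEq
    have e1 : L1 a - 1 = L1 b - 1 := congrArg (fun p => (p.1 : Fin n).val) hEq
    have e2 : L2 a - 1 = L2 b - 1 := congrArg (fun p => (p.2.1 : Fin n).val) hEq
    have e3 : L3 a - 1 = L3 b - 1 := congrArg (fun p => (p.2.2 : Fin n).val) hEq
    have g1 : 1 ≤ L1 a := one_le_chLen g (· < ·) a
    have g2 : 1 ≤ L2 a := one_le_chLen g (fun a b => b < a) a
    have g3 : 1 ≤ L3 a := one_le_chLen g (· = ·) a
    have g1' : 1 ≤ L1 b := one_le_chLen g (· < ·) b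
    have g2' : 1 ≤ L2 b := one_le_chLen g (fun a b => b < a) b
    have g3' : 1 ≤ L3 b := one_le_chLen g (· = ·) b
    rcases lt_trichotomy (g a) (g b) with h | h | h
    · have : L1 a < L1 b := chLen_lt_chLen (rel := (· < ·))
        (fun x y z h1 h2 => lt_trans h1 h2) hab h
      omega
    · have : L3 a < L3 b := chLen_lt_chLen (rel := (· = ·))
        (fun x y z h1 h2 => h1.trans h2) hab h
      omega
    · have : L2 a < L2 b := chLen_lt_chLen (rel := fun a b => b < a)
        (fun x y z h1 h2 => lt_trans h2 h1) hab h
      omega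
  have hinj : Function.Injective F := by
    intro a b hab
    by_contra hne
    rcases Ne.lt_or_gt hne with h | h
    · exact key a b h hab
    · exact key b a h hab.symm
  have := Fintype.card_le_of_injective F hinj
  simp only [Fintype.card_fin, Fintype.card_prod] at this
  nlinarith [this, hM]

def esBound : ℕ → ℕ → ℕ
  | 0, n => n
  | d + 1, n => esBound d (n ^ 3 + 1)

lemma esBound_mono_n (d : ℕ) : Monotone (esBound d) := by
  induction d with
  | zero => exact fun a b h => h
  | succ d ih =>
    intro a b h
    exact ih (by have := Nat.pow_le_pow_left h 3; omega)

lemma le_esBound (d n : ℕ) : n ≤ esBound d n := by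
  induction d generalizing n with
  | zero => exact le_refl n
  | succ d ih =>
    calc n ≤ n ^ 3 + 1 := by have := Nat.le_self_pow (by norm_num : (3:ℕ) ≠ 0) n; omega
    _ ≤ esBound d (n ^ 3 + 1) := ih _

lemma esBound_mono_d {d d' : ℕ} (h : d ≤ d') (n : ℕ) : esBound d n ≤ esBound d' n := by
  induction d' with
  | zero => simp_all
  | succ d' ih =>
    rcases Nat.lt_or_ge d (d' + 1) with h' | h'
    · calc esBound d n ≤ esBound d' n := ih (by omega)
      _ ≤ esBound d' (n ^ 3 + 1) := esBound_mono_n d' (by have := Nat.le_self_pow (by norm_num : (3:ℕ) ≠ 0) n; omega)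
      _ = esBound (d' + 1) n := rfl
    · have : d = d' + 1 := by omega
      subst this; exact le_refl _

lemma multiDim (d : ℕ) : ∀ (n M : ℕ), esBound d n ≤ M → ∀ P : Fin M → Fin d → ℝ,
    ∃ φ : Fin n → Fin M, StrictMono φ ∧ ∀ k : Fin d,
      ((∀ i j : Fin n, i < j → P (φ i) k < P (φ j) k) ∨
       (∀ i j : Fin n, i < j → P (φ j) k < P (φ i) k) ∨
       (∀ i j : Fin n, i < j → P (φ i) k = P (φ j) k)) := by
  induction d with
  | zero =>
    intro n M hM P
    exact ⟨Fin.castLE hM, fun a b h => h, fun k => k.elim0⟩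
  | succ d ih =>
    intro n M hM P
    obtain ⟨φ', hφ'mono, hφ'⟩ := ih (n ^ 3 + 1) M hM (fun i k => P i k.castSucc)
    obtain ⟨ψ, hψmono, hψ⟩ := oneDim (M := n ^ 3 + 1) (n := n) (by omega)
      (fun j => P (φ' j) (Fin.last d))
    refine ⟨φ' ∘ ψ, hφ'mono.comp hψmono, ?_⟩
    intro k
    refine Fin.lastCases ?_ ?_ k
    · rcases hψ with h | h | h
      · exact Or.inl fun i j hij => h i j hij
      · exact Or.inr (Or.inl fun i j hij => h i j hij)
      · exact Or.inr (Or.inr fun i j hij => h i j hij)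
    · intro k'
      rcases hφ' k' with h | h | h
      · exact Or.inl fun i j hij => h (ψ i) (ψ j) (hψmono hij)
      · exact Or.inr (Or.inl fun i j hij => h (ψ i) (ψ j) (hψmono hij))
      · exact Or.inr (Or.inr fun i j hij => h (ψ i) (ψ j) (hψmono hij))

open Finset

lemma weakMaj_iff' {d : ℕ} (x y : Fin d → ℝ) :
    weakMaj x y ↔ (Finset.univ.filter fun k => x k < y k).card <
      (Finset.univ.filter fun k => y k < x k).card := by
  rw [weakMaj, Nat.card_eq_fintype_card, Nat.card_eq_fintype_card,
    Fintype.card_subtype, Fintype.card_subtype]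

lemma card_filter_equiv {α β : Type*} [Fintype α] [Fintype β] [DecidableEq α] [DecidableEq β]
    (e : α ≃ β) (p : β → Prop) [DecidablePred p] :
    (Finset.univ.filter fun a => p (e a)).card = (Finset.univ.filter p).card := by
  apply Finset.card_bij (fun a _ => e a)
  · intro a ha
    simp only [Finset.mem_filter, Finset.mem_univ, true_and] at ha ⊢
    exact ha
  · intro a ha b hb hab
    exact e.injective hab
  · intro b hb
    refine ⟨e.symm b, ?_, by simp⟩
    simp only [Finset.mem_filter, Finset.mem_univ, true_and, Equiv.apply_symm_apply] at hb ⊢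
    exact hb

section McG

variable {V : Type} [Fintype V] [DecidableEq V]

noncomputable def mcBeta (u v w : V) : ℤ :=
  if w = u then (Fintype.card V : ℤ) + 1
  else if w = v then (Fintype.card V : ℤ)
  else ((Fintype.equivFin V w : ℕ) : ℤ)

open scoped Classical in
noncomputable def mcVal (D : WDigraph V) (a : (V × V) × Fin 2) (w : V) : ℤ :=
  if a.2 = 0 then mcBeta a.1.1 a.1.2 w
  else if D.Adj a.1.1 a.1.2 then -(mcBeta a.1.2 a.1.1 w) else -(mcBeta a.1.1 a.1.2 w)

lemma mcVal_zero (D : WDigraph V) (u v w : V) : mcVal D ((u, v), 0) w = mcBeta u v w := by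
  simp [mcVal]

lemma mcVal_one_adj {D : WDigraph V} {u v : V} (hA : D.Adj u v) (w : V) :
    mcVal D ((u, v), 1) w = -(mcBeta v u w) := by
  simp [mcVal, hA, Fin.ext_iff]

lemma mcVal_one_nadj {D : WDigraph V} {u v : V} (hA : ¬ D.Adj u v) (w : V) :
    mcVal D ((u, v), 1) w = -(mcBeta u v w) := by
  simp [mcVal, hA, Fin.ext_iff]

def jsw (a : (V × V) × Fin 2) : (V × V) × Fin 2 :=
  (a.1, if a.2 = 0 then 1 else 0)

omit [Fintype V] [DecidableEq V] in
lemma jsw_invol (a : (V × V) × Fin 2) : jsw (jsw a) = a := by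
  rcases a with ⟨p, j⟩
  fin_cases j <;> simp [jsw]

omit [Fintype V] [DecidableEq V] in
lemma jsw_injective : Function.Injective (jsw (V := V)) := by
  intro a b h
  rw [← jsw_invol a, h, jsw_invol]

omit [Fintype V] [DecidableEq V] in
lemma jsw_zero (p : V × V) : jsw (p, 0) = (p, 1) := by simp [jsw]

omit [Fintype V] [DecidableEq V] in
lemma jsw_one (p : V × V) : jsw (p, 1) = (p, 0) := by simp [jsw, Fin.ext_iff]

lemma mcBeta_swap {u v x y : V} (hxy : x ≠ y) (h1 : ¬(u = x ∧ v = y)) (h2 : ¬(u = y ∧ v = x)) :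
    (mcBeta u v x < mcBeta u v y ↔ mcBeta v u x < mcBeta v u y) := by
  have hx : ((Fintype.equivFin V x : ℕ)) < Fintype.card V := (Fintype.equivFin V x).isLt
  have hy : ((Fintype.equivFin V y : ℕ)) < Fintype.card V := (Fintype.equivFin V y).isLt
  unfold mcBeta
  split_ifs <;> simp_all <;> omega

lemma mcVal_flip (D : WDigraph V) {x y u v : V} (j : Fin 2) (hxy : x ≠ y)
    (h1 : ¬(D.Adj u v ∧ u = x ∧ v = y)) (h2 : ¬(D.Adj u v ∧ u = y ∧ v = x)) :
    (mcVal D ((u, v), j) y < mcVal D ((u, v), j) x ↔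
      mcVal D (jsw ((u, v), j)) x < mcVal D (jsw ((u, v), j)) y) := by
  classical
  have hswap : D.Adj u v → (mcBeta u v y < mcBeta u v x ↔ mcBeta v u y < mcBeta v u x) := by
    intro hA
    exact mcBeta_swap hxy.symm (fun h => h2 ⟨hA, h.1, h.2⟩) (fun h => h1 ⟨hA, h.1, h.2⟩)
  have hswap2 : D.Adj u v → (mcBeta v u x < mcBeta v u y ↔ mcBeta u v x < mcBeta u v y) := by
    intro hA
    exact mcBeta_swap hxy (fun h => h2 ⟨hA, h.2, h.1⟩) (fun h => h1 ⟨hA, h.2, h.1⟩)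
  fin_cases j
  · rw [show ((⟨0, by omega⟩ : Fin 2)) = (0 : Fin 2) from rfl, jsw_zero, mcVal_zero, mcVal_zero]
    by_cases hA : D.Adj u v
    · rw [mcVal_one_adj hA, mcVal_one_adj hA, neg_lt_neg_iff]
      exact hswap hA
    · rw [mcVal_one_nadj hA, mcVal_one_nadj hA, neg_lt_neg_iff]
  · rw [show ((⟨1, by omega⟩ : Fin 2)) = (1 : Fin 2) from rfl, jsw_one, mcVal_zero, mcVal_zero]
    by_cases hA : D.Adj u v
    · rw [mcVal_one_adj hA, mcVal_one_adj hA, neg_lt_neg_iff]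
      exact hswap2 hA
    · rw [mcVal_one_nadj hA, mcVal_one_nadj hA, neg_lt_neg_iff]

lemma exists_realizable (D : WDigraph V) : ∃ K : ℕ, Realizable D K := by
  classical
  set e := Fintype.equivFin ((V × V) × Fin 2) with he
  set K := Fintype.card ((V × V) × Fin 2) with hK
  set T : V → V → Finset ((V × V) × Fin 2) :=
    fun x y => Finset.univ.filter (fun a => mcVal D a y < mcVal D a x) with hT
  set f : V → Fin K → ℝ := fun w i => ((mcVal D (e.symm i) w : ℤ) : ℝ) with hf
  have memT : ∀ x y (a : (V × V) × Fin 2), a ∈ T x y ↔ mcVal D a y < mcVal D a x := by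
    intro x y a
    simp [hT]
  have step1 : ∀ x y : V, (weakMaj (f x) (f y) ↔ (T y x).card < (T x y).card) := by
    intro x y
    rw [weakMaj_iff']
    have key : ∀ z w : V,
        (Finset.univ.filter fun i : Fin K => f z i < f w i).card = (T w z).card := by
      intro z w
      have h2 : (Finset.univ.filter fun i : Fin K => f z i < f w i)
          = (Finset.univ.filter fun i : Fin K =>
              (fun a : (V × V) × Fin 2 => mcVal D a z < mcVal D a w) (e.symm i)) := by
        apply Finset.filter_congr
        intro i _
        simp only [hf]
        constructor
        · intro h; exact_mod_cast h
        · intro h; exact_mod_cast h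
      rw [h2]
      exact card_filter_equiv e.symm (fun a => mcVal D a z < mcVal D a w)
    rw [key x y, key y x]
  have step2 : ∀ x y : V, x ≠ y → ¬ D.Adj x y → ¬ D.Adj y x →
      (T x y).card = (T y x).card := by
    intro x y hxy hnxy hnyx
    apply Finset.card_bij (fun a _ => jsw a)
    · rintro ⟨⟨u, v⟩, j⟩ ha
      rw [memT] at ha
      rw [memT]
      exact (mcVal_flip D j hxy
        (by rintro ⟨hA', rfl, rfl⟩; exact hnxy hA')
        (by rintro ⟨hA', rfl, rfl⟩; exact hnyx hA')).mp ha
    · intro a _ b _ hab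
      exact jsw_injective hab
    · rintro ⟨⟨u, v⟩, j⟩ hb
      refine ⟨jsw ((u, v), j), ?_, jsw_invol _⟩
      rw [memT] at hb
      rw [memT]
      exact (mcVal_flip D j hxy.symm
        (by rintro ⟨hA', rfl, rfl⟩; exact hnyx hA')
        (by rintro ⟨hA', rfl, rfl⟩; exact hnxy hA')).mp hb
  have step3 : ∀ x y : V, D.Adj x y → (T y x).card < (T x y).card := by
    intro x y hA
    have hxy : x ≠ y := by rintro rfl; exact D.asymm x x hA hA
    have hnyx : ¬ D.Adj y x := D.asymm _ _ hA
    have hbxx : mcBeta x y x = (Fintype.card V : ℤ) + 1 := by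
      rw [mcBeta, if_pos rfl]
    have hbxy : mcBeta x y y = (Fintype.card V : ℤ) := by
      rw [mcBeta, if_neg (Ne.symm hxy), if_pos rfl]
    have hbyx : mcBeta y x x = (Fintype.card V : ℤ) := by
      rw [mcBeta, if_neg hxy, if_pos rfl]
    have hbyy : mcBeta y x y = (Fintype.card V : ℤ) + 1 := by
      rw [mcBeta, if_pos rfl]
    have hmem : ((x, y), (0 : Fin 2)) ∈ T x y := by
      rw [memT, mcVal_zero, mcVal_zero, hbxx, hbxy]
      omega
    have himg : ∀ a ∈ T y x, jsw a ∈ T x y := by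
      rintro ⟨⟨u, v⟩, j⟩ ha
      rw [memT] at ha
      have hne : ¬(D.Adj u v ∧ u = x ∧ v = y) := by
        rintro ⟨hA', rfl, rfl⟩
        fin_cases j
        · rw [show ((⟨0, by omega⟩ : Fin 2)) = (0 : Fin 2) from rfl,
            mcVal_zero, mcVal_zero, hbxx, hbxy] at ha
          omega
        · rw [show ((⟨1, by omega⟩ : Fin 2)) = (1 : Fin 2) from rfl,
            mcVal_one_adj hA', mcVal_one_adj hA', hbyx, hbyy] at ha
          omega
      rw [memT]
      exact (mcVal_flip D j hxy.symm
        (by rintro ⟨hA', rfl, rfl⟩; exact hnyx hA') hne).mp ha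
    have hnotin : ((x, y), (0 : Fin 2)) ∉ (T y x).image jsw := by
      rw [Finset.mem_image]
      rintro ⟨a, ha, haeq⟩
      have : a = ((x, y), (1 : Fin 2)) := by
        have := congrArg jsw haeq
        rw [jsw_invol, jsw_zero] at this
        exact this
      subst this
      rw [memT, mcVal_one_adj hA, mcVal_one_adj hA, hbyx, hbyy] at ha
      omega
    have hsub : (T y x).image jsw ⊆ T x y := Finset.image_subset_iff.mpr himg
    have hss : (T y x).image jsw ⊂ T x y :=
      (Finset.ssubset_iff_of_subset hsub).mpr ⟨_, hmem, hnotin⟩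
    calc (T y x).card = ((T y x).image jsw).card :=
          (Finset.card_image_of_injective _ jsw_injective).symm
      _ < (T x y).card := Finset.card_lt_card hss
  refine ⟨K, f, fun u v => ⟨fun hA => (step1 u v).mpr (step3 u v hA), fun hw => ?_⟩⟩
  by_cases hA : D.Adj u v
  · exact hA
  exfalso
  rw [step1] at hw
  by_cases hA' : D.Adj v u
  · have := step3 v u hA'
    omega
  by_cases huv : u = v
  · subst huv
    exact lt_irrefl _ hw
  · have := step2 u v huv hA hA'
    omega

end McG

section Lower

def lowV (d r : ℕ) : Type := Fin r ⊕ {S : Finset (Fin r) // S.card = d + 1}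

instance (d r : ℕ) : Fintype (lowV d r) := by unfold lowV; infer_instance
instance (d r : ℕ) : DecidableEq (lowV d r) := by unfold lowV; infer_instance

def lowAdj (d r : ℕ) : lowV d r → lowV d r → Prop :=
  fun x y => match x, y with
  | Sum.inl i, Sum.inr S => i ∈ S.1
  | _, _ => False

def lowD (d r : ℕ) : WDigraph (lowV d r) where
  Adj := lowAdj d r
  asymm := by
    intro u v h
    rcases u with i | S <;> rcases v with j | T <;> simp [lowAdj] at h ⊢

lemma lowD_trans (d r : ℕ) : ∀ x y z, (lowD d r).Adj x y → (lowD d r).Adj y z →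
    (lowD d r).Adj x z := by
  intro x y z h1 h2
  rcases x with i | S <;> rcases y with j | T <;> rcases z with l | U <;>
    simp [lowD, lowAdj] at h1 h2 ⊢

lemma lower_not_realizable (d d' r : ℕ) (hd' : d' ≤ d)
    (hrr : esBound d (2 * d + 2) ≤ r) :
    ¬ Realizable (lowD d r) d' := by
  classical
  rintro ⟨f, hf⟩
  have hrN : esBound d' (2 * d + 2) ≤ r := le_trans (esBound_mono_d hd' (2 * d + 2)) hrr
  obtain ⟨m, hm, htri⟩ := multiDim d' (2 * d + 2) r hrN (fun i => f (Sum.inl i))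
  set Q : Fin (2 * d + 2) → Fin d' → ℝ := fun j => f (Sum.inl (m j)) with hQ
  set Inc : Fin d' → Prop := fun k => ∀ i j : Fin (2 * d + 2), i < j → Q i k < Q j k with hInc
  set Dec : Fin d' → Prop := fun k => ∀ i j : Fin (2 * d + 2), i < j → Q j k < Q i k with hDec
  set Cst : Fin d' → Prop := fun k => ∀ i j : Fin (2 * d + 2), i < j → Q i k = Q j k with hCst
  have htri' : ∀ k, Inc k ∨ Dec k ∨ Cst k := fun k => htri k
  set A : Finset (Fin d') := univ.filter Inc with hA
  set B : Finset (Fin d') := (univ.filter fun k => ¬ Inc k).filter Dec with hB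
  set C : Finset (Fin d') := (univ.filter fun k => ¬ Inc k).filter (fun k => ¬ Dec k) with hC
  have hCcst : ∀ k ∈ C, Cst k := by
    intro k hk
    simp only [hC, Finset.mem_filter] at hk
    rcases htri' k with h | h | h
    · exact absurd h hk.1.2
    · exact absurd h hk.2
    · exact h
  have minj : Function.Injective (fun i : Fin (d + 1) => m ⟨2 * i.1, by omega⟩) := by
    intro i1 i2 h
    have := hm.injective h
    simp only [Fin.mk.injEq] at this
    exact Fin.ext (by omega)
  set S : Finset (Fin r) := Finset.image (fun i : Fin (d + 1) => m ⟨2 * i.1, by omega⟩) univ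
    with hS
  have hScard : S.card = d + 1 := by
    rw [hS, Finset.card_image_of_injective _ minj, Finset.card_univ, Fintype.card_fin]
  have hmemS : ∀ j : Fin (2 * d + 2), m j ∈ S ↔ j.1 % 2 = 0 := by
    intro j
    constructor
    · intro h
      rw [hS, Finset.mem_image] at h
      obtain ⟨i, _, hi⟩ := h
      have := hm.injective hi
      have : 2 * i.1 = j.1 := by
        simpa [Fin.ext_iff] using this
      omega
    · intro h
      rw [hS, Finset.mem_image]
      refine ⟨⟨j.1 / 2, by omega⟩, Finset.mem_univ _, ?_⟩
      congr 1
      exact Fin.ext (by simp; omega)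
  set q : Fin d' → ℝ := f (Sum.inr ⟨S, hScard⟩) with hq
  have hfQ : ∀ j : Fin (2 * d + 2), m j ∈ S ↔ weakMaj (Q j) q := by
    intro j
    have := hf (Sum.inl (m j)) (Sum.inr ⟨S, hScard⟩)
    simpa [lowD, lowAdj] using this
  have hback : ∀ j : Fin (2 * d + 2), ¬ weakMaj q (Q j) := by
    intro j h
    have := (hf (Sum.inr ⟨S, hScard⟩) (Sum.inl (m j))).mpr h
    simpa [lowD, lowAdj] using this
  have hties : ∀ i j : Fin r, i ≠ j → ¬ weakMaj (f (Sum.inl i)) (f (Sum.inl j)) := by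
    intro i j _ h
    have := (hf (Sum.inl i) (Sum.inl j)).mpr h
    simpa [lowD, lowAdj] using this
  set sg : Fin (2 * d + 2) → Fin d' → ℤ :=
    fun j k => if q k < Q j k then 1 else if Q j k < q k then -1 else 0 with hsg
  set t : Fin (2 * d + 2) → ℤ := fun j => ∑ k, sg j k with ht
  set u : Fin (2 * d + 2) → ℤ := fun j => ∑ k ∈ A, sg j k with hu
  set v : Fin (2 * d + 2) → ℤ := fun j => ∑ k ∈ B, sg j k with hv
  set w : Fin (2 * d + 2) → ℤ := fun j => ∑ k ∈ C, sg j k with hw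
  have huvw : ∀ j, t j = u j + v j + w j := by
    intro j
    show (∑ k, sg j k) = (∑ k ∈ A, sg j k) + (∑ k ∈ B, sg j k) + (∑ k ∈ C, sg j k)
    rw [hA, hB, hC, ← Finset.sum_filter_add_sum_filter_not univ Inc (sg j),
      ← Finset.sum_filter_add_sum_filter_not (univ.filter fun k => ¬ Inc k) Dec (sg j)]
    ring
  have hsplit : ∀ j, t j = ((univ.filter fun k => q k < Q j k).card : ℤ)
      - ((univ.filter fun k => Q j k < q k).card : ℤ) := by
    intro j
    have hpt : ∀ k, sg j k =
        (if q k < Q j k then (1 : ℤ) else 0) - (if Q j k < q k then (1 : ℤ) else 0) := by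
      intro k
      simp only [hsg]
      by_cases h1 : q k < Q j k
      · rw [if_pos h1, if_pos h1, if_neg (lt_asymm h1)]; norm_num
      · by_cases h2 : Q j k < q k
        · rw [if_neg h1, if_pos h2, if_neg h1, if_pos h2]; norm_num
        · rw [if_neg h1, if_neg h2, if_neg h1, if_neg h2]; norm_num
    show (∑ k, sg j k) = _
    simp only [hpt]
    rw [Finset.sum_sub_distrib, Finset.sum_boole, Finset.sum_boole]
  have htpos : ∀ j : Fin (2 * d + 2), j.1 % 2 = 0 → 1 ≤ t j := by
    intro j hj
    have hwm := (hfQ j).mp ((hmemS j).mpr hj)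
    rw [weakMaj_iff'] at hwm
    rw [hsplit]
    omega
  have htzero : ∀ j : Fin (2 * d + 2), j.1 % 2 = 1 → t j = 0 := by
    intro j hj
    have h1 : ¬ weakMaj (Q j) q := fun h => by
      have := (hfQ j).mpr h
      rw [hmemS j] at this
      omega
    have h2 := hback j
    rw [weakMaj_iff'] at h1 h2
    rw [hsplit]
    omega
  have hsgv : ∀ (c x y : ℝ), x ≤ y →
      (if c < x then (1 : ℤ) else if x < c then -1 else 0) ≤
      (if c < y then (1 : ℤ) else if y < c then -1 else 0) := by
    intro c x y hxy
    split_ifs <;> linarith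
  have humono : ∀ a b : Fin (2 * d + 2), a ≤ b → u a ≤ u b := by
    intro a b hab
    show (∑ k ∈ A, sg a k) ≤ ∑ k ∈ A, sg b k
    apply Finset.sum_le_sum
    intro k hk
    rw [hA, Finset.mem_filter] at hk
    have : Q a k ≤ Q b k := by
      rcases lt_or_eq_of_le hab with h | h
      · exact le_of_lt (hk.2 a b h)
      · rw [h]
    exact hsgv _ _ _ this
  have hvmono : ∀ a b : Fin (2 * d + 2), a ≤ b → v b ≤ v a := by
    intro a b hab
    show (∑ k ∈ B, sg b k) ≤ ∑ k ∈ B, sg a k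
    apply Finset.sum_le_sum
    intro k hk
    rw [hB, Finset.mem_filter, Finset.mem_filter] at hk
    have : Q b k ≤ Q a k := by
      rcases lt_or_eq_of_le hab with h | h
      · exact le_of_lt (hk.2 a b h)
      · rw [h]
    exact hsgv _ _ _ this
  have hweq : ∀ a b : Fin (2 * d + 2), w a = w b := by
    intro a b
    show (∑ k ∈ C, sg a k) = ∑ k ∈ C, sg b k
    apply Finset.sum_congr rfl
    intro k hk
    have hc := hCcst k hk
    have hQeq : Q a k = Q b k := by
      rcases lt_trichotomy a b with h | h | h
      · exact hc a b h
      · rw [h]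
      · exact (hc b a h).symm
    simp only [hsg, hQeq]
  have hvub : v ⟨0, by omega⟩ ≤ (B.card : ℤ) := by
    show (∑ k ∈ B, sg ⟨0, by omega⟩ k) ≤ (B.card : ℤ)
    calc ∑ k ∈ B, sg ⟨0, by omega⟩ k ≤ ∑ _k ∈ B, (1 : ℤ) := by
          apply Finset.sum_le_sum
          intro k _
          simp only [hsg]; split_ifs <;> norm_num
    _ = (B.card : ℤ) := by simp
  have hvlb : -(B.card : ℤ) ≤ v ⟨2 * d + 1, by omega⟩ := by
    show -(B.card : ℤ) ≤ (∑ k ∈ B, sg ⟨2 * d + 1, by omega⟩ k)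
    calc -(B.card : ℤ) = ∑ _k ∈ B, (-1 : ℤ) := by simp
    _ ≤ ∑ k ∈ B, sg ⟨2 * d + 1, by omega⟩ k := by
          apply Finset.sum_le_sum
          intro k _
          simp only [hsg]; split_ifs <;> norm_num
  have hj01 : (⟨0, by omega⟩ : Fin (2 * d + 2)) < ⟨1, by omega⟩ := Fin.mk_lt_mk.mpr (by omega)
  have hfilA : (univ.filter fun k => Q ⟨0, by omega⟩ k < Q ⟨1, by omega⟩ k) = A := by
    ext k
    simp only [Finset.mem_filter, Finset.mem_univ, true_and, hA]
    constructor
    · intro h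
      rcases htri' k with h' | h' | h'
      · exact h'
      · exact absurd (h' _ _ hj01) (lt_asymm h)
      · exact absurd (h' _ _ hj01) (ne_of_lt h)
    · intro h
      exact h _ _ hj01
  have hfilB : (univ.filter fun k => Q ⟨1, by omega⟩ k < Q ⟨0, by omega⟩ k) = B := by
    ext k
    simp only [Finset.mem_filter, Finset.mem_univ, true_and, hB]
    constructor
    · intro h
      rcases htri' k with h' | h' | h'
      · exact absurd (h' _ _ hj01) (lt_asymm h)
      · exact ⟨fun hi => absurd (hi _ _ hj01) (lt_asymm h), h'⟩
      · exact absurd (h' _ _ hj01) (ne_of_gt h)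
    · intro h
      exact h.2 _ _ hj01
  have hmne : m ⟨0, by omega⟩ ≠ m ⟨1, by omega⟩ := fun h => by
    have := hm.injective h
    simp [Fin.ext_iff] at this
  have htie1 : ¬ weakMaj (Q ⟨0, by omega⟩) (Q ⟨1, by omega⟩) := hties _ _ hmne
  have htie2 : ¬ weakMaj (Q ⟨1, by omega⟩) (Q ⟨0, by omega⟩) := hties _ _ hmne.symm
  rw [weakMaj_iff'] at htie1 htie2
  have hab : A.card = B.card := by
    rw [← hfilA, ← hfilB]
    omega
  have hABd : A.card + B.card ≤ d' := by
    have hdisj : Disjoint A B := by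
      rw [Finset.disjoint_left]
      intro k hk1 hk2
      rw [hA, Finset.mem_filter] at hk1
      rw [hB, Finset.mem_filter, Finset.mem_filter] at hk2
      exact hk2.1.2 hk1.2
    calc A.card + B.card = (A ∪ B).card := (Finset.card_union_of_disjoint hdisj).symm
    _ ≤ (univ : Finset (Fin d')).card := Finset.card_le_card (Finset.subset_univ _)
    _ = d' := by simp
  have hvstep : ∀ i : ℕ, ∀ _hi : i ≤ d, v ⟨2 * i + 1, by omega⟩ ≤ v ⟨2 * i, by omega⟩ - 1 := by
    intro i hi
    have h0 := htzero ⟨2 * i + 1, by omega⟩ (by show (2 * i + 1) % 2 = 1; omega)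
    have h1 := htpos ⟨2 * i, by omega⟩ (by show (2 * i) % 2 = 0; omega)
    have h2 := humono ⟨2 * i, by omega⟩ ⟨2 * i + 1, by omega⟩ (Fin.mk_le_mk.mpr (by omega))
    have h3 := hweq (⟨2 * i, by omega⟩ : Fin (2 * d + 2)) ⟨2 * i + 1, by omega⟩
    have e0 := huvw ⟨2 * i + 1, by omega⟩
    have e1 := huvw ⟨2 * i, by omega⟩
    linarith
  have hdown : ∀ i : ℕ, ∀ _hi : i ≤ d, v ⟨2 * i + 1, by omega⟩ ≤ (B.card : ℤ) - (i + 1) := by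
    intro i
    induction i with
    | zero =>
      intro _
      have h1 := hvstep 0 (by omega)
      have h3 : v ⟨2 * 0, by omega⟩ ≤ (B.card : ℤ) := hvub
      push_cast
      linarith
    | succ i ih =>
      intro hi
      have h1 := hvstep (i + 1) hi
      have h2 := hvmono ⟨2 * i + 1, by omega⟩ ⟨2 * (i + 1), by omega⟩
        (Fin.mk_le_mk.mpr (by omega))
      have h3 := ih (by omega)
      push_cast
      push_cast at h3
      linarith
  have hfinal := hdown d (le_refl _)
  have hlast : -(B.card : ℤ) ≤ v ⟨2 * d + 1, by omega⟩ := hvlb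
  have hge : 2 * B.card ≥ d + 1 := by
    have : (2 * B.card : ℤ) ≥ (d : ℤ) + 1 := by linarith
    exact_mod_cast this
  omega

end Lower


/-- For every positive integer `d` there is a finite transitive digraph that is
not `ℝ^d`-realizable; consequently its weak majority dimension exceeds `d`. -/
theorem stmt_7 (d : ℕ) (hd : 0 < d) :
    ∃ (V : Type) (_ : Fintype V) (D : WDigraph V),
      (∀ x y z, D.Adj x y → D.Adj y z → D.Adj x z) ∧
      ¬ Realizable D d ∧ d < wdim D := by
  classical
  set r := esBound d (2 * d + 2) with hr
  refine ⟨lowV d r, inferInstance, lowD d r, lowD_trans d r, ?_, ?_⟩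
  · exact lower_not_realizable d d r le_rfl le_rfl
  · obtain ⟨K, hK⟩ := exists_realizable (lowD d r)
    have hne : {n : ℕ | Realizable (lowD d r) n}.Nonempty := ⟨K, hK⟩
    have hmem : Realizable (lowD d r) (wdim (lowD d r)) := Nat.sInf_mem hne
    by_contra h
    push_neg at h
    exact lower_not_realizable d (wdim (lowD d r)) r h le_rfl hmem
end

section
/- Let D be a digraph, and let S ⊆ V(D) be a set of vertices containing exactly one representative of each equivalence class of the homogeneity relation ∼ on V(D). Let D* be the subdigraph of D induced by S. Then for every nonnegative integer d, D is ℝ^d-realizable if and only if D* is ℝ^d-realizable; consequently dim(D) = dim(D*). -/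
/-- Two vertices are homogeneous if they have the same out-neighbours and the
same in-neighbours. -/
def Homog {V : Type*} (D : WDigraph V) (u v : V) : Prop :=
  (∀ w, D.Adj u w ↔ D.Adj v w) ∧ (∀ w, D.Adj w u ↔ D.Adj w v)

/-- The subdigraph of `D` induced by a set `S` of vertices. -/
def WDigraph.induce {V : Type*} (D : WDigraph V) (S : Set V) : WDigraph S where
  Adj x y := D.Adj x y
  asymm := fun x y h h' => D.asymm x y h h'

/-- If `S` contains exactly one representative of each equivalence class of the
homogeneity relation, then `D` is `ℝ^d`-realizable iff the maximally condensed
subdigraph `D* = D[S]` is; consequently `dim D = dim D*`. -/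
theorem stmt_8 {V : Type*} (D : WDigraph V) (S : Set V)
    (hrep : ∀ v : V, ∃! s : V, s ∈ S ∧ Homog D v s) :
    (∀ d : ℕ, Realizable D d ↔ Realizable (D.induce S) d) ∧
    wdim D = wdim (D.induce S) := by
  have hex : ∀ v : V, ∃ s : V, s ∈ S ∧ Homog D v s := fun v => (hrep v).exists
  choose r hrS hrH using hex
  have key : ∀ d : ℕ, Realizable D d ↔ Realizable (D.induce S) d := by
    intro d
    constructor
    · rintro ⟨f, hf⟩
      exact ⟨fun x => f x, fun u v => hf u v⟩
    · rintro ⟨f, hf⟩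
      refine ⟨fun v => f ⟨r v, hrS v⟩, fun u v => ?_⟩
      have h1 : D.Adj u v ↔ D.Adj (r u) (r v) := by
        rw [(hrH u).1 v, (hrH v).2 (r u)]
      rw [h1]
      exact hf ⟨r u, hrS u⟩ ⟨r v, hrS v⟩
  refine ⟨key, ?_⟩
  unfold wdim
  congr 1
  ext d
  exact key d
end

section
/- The directed path of length two (three vertices v_1, v_2, v_3 with arcs (v_1, v_2) and (v_2, v_3) and no other arcs) is ℝ^3-realizable but not ℝ^2-realizable; that is, its weak majority dimension is three. -/
/-- The directed path of length two: vertices `v₁ = 0`, `v₂ = 1`, `v₃ = 2`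
with arcs `(v₁,v₂)` and `(v₂,v₃)` only. -/
def pathTwo : WDigraph (Fin 3) where
  Adj x y := (x = 0 ∧ y = 1) ∨ (x = 1 ∧ y = 2)
  asymm := by decide


section Helpers

lemma card_eq_of_iff {d : ℕ} {P : Fin d → Prop} (Q : Fin d → Prop) [DecidablePred Q]
    (h : ∀ i, P i ↔ Q i) : Nat.card {i // P i} = Fintype.card {i // Q i} := by
  rw [Nat.card_congr (Equiv.subtypeEquivRight h), Nat.card_eq_fintype_card]

lemma wm_of {d : ℕ} {x y : Fin d → ℝ} (h1 : ∀ i, y i ≤ x i) (h2 : ∃ i, y i < x i) :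
    weakMaj x y := by
  have he : IsEmpty {i : Fin d // x i < y i} :=
    ⟨fun ⟨i, hi⟩ => absurd hi (not_lt.mpr (h1 i))⟩
  have hne : Nonempty {i : Fin d // y i < x i} := by
    obtain ⟨i, hi⟩ := h2; exact ⟨⟨i, hi⟩⟩
  unfold weakMaj
  rw [Nat.card_of_isEmpty]
  exact Nat.card_pos

lemma wm_le2 {d : ℕ} (hd : d ≤ 2) {x y : Fin d → ℝ} (h : weakMaj x y) :
    (∀ i, y i ≤ x i) ∧ ∃ i, y i < x i := by
  classical
  unfold weakMaj at h
  rw [Nat.card_eq_fintype_card, Nat.card_eq_fintype_card] at h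
  constructor
  · intro i
    by_contra hi
    push_neg at hi
    have ha : 0 < Fintype.card {i : Fin d // x i < y i} :=
      Fintype.card_pos_iff.mpr ⟨⟨i, hi⟩⟩
    have hble : Fintype.card {i : Fin d // y i < x i} ≤ d := by
      simpa using Fintype.card_subtype_le (fun i : Fin d => y i < x i)
    have hbd : Fintype.card {i : Fin d // y i < x i} = Fintype.card (Fin d) := by
      simp; omega
    have hall : ∀ j, y j < x j := by
      have hbd' : (Finset.univ.filter (fun j => y j < x j)).card = Fintype.card (Fin d) := by
        rw [← Fintype.card_subtype]; exact hbd
      have huniv := Finset.eq_univ_of_card _ hbd'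
      intro j
      have : j ∈ Finset.univ.filter (fun j => y j < x j) := by rw [huniv]; simp
      simpa using this
    exact absurd (hall i) (not_lt.mpr (le_of_lt hi))
  · have : 0 < Fintype.card {i : Fin d // y i < x i} := by omega
    obtain ⟨⟨i, hi⟩⟩ := Fintype.card_pos_iff.mp this
    exact ⟨i, hi⟩

lemma wm_asymm {d : ℕ} {x y : Fin d → ℝ} (h : weakMaj x y) : ¬ weakMaj y x := by
  unfold weakMaj at *; omega

lemma not_real_le2 {d : ℕ} (hd : d ≤ 2) : ¬ Realizable pathTwo d := by
  rintro ⟨f, hf⟩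
  have h01 : weakMaj (f 0) (f 1) := (hf 0 1).mp (by left; exact ⟨rfl, rfl⟩)
  have h12 : weakMaj (f 1) (f 2) := (hf 1 2).mp (by right; exact ⟨rfl, rfl⟩)
  obtain ⟨ha1, _⟩ := wm_le2 hd h01
  obtain ⟨hb1, j, hj⟩ := wm_le2 hd h12
  have h02 : weakMaj (f 0) (f 2) :=
    wm_of (fun i => le_trans (hb1 i) (ha1 i)) ⟨j, lt_of_lt_of_le hj (ha1 j)⟩
  have := (hf 0 2).mpr h02
  simp [pathTwo] at this

/-- The realizer in `ℝ³`. -/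
noncomputable def g : Fin 3 → Fin 3 → ℝ := ![![2,0,1], ![1,2,0], ![0,1,1]]

lemma wm01 : weakMaj (g 0) (g 1) := by
  unfold weakMaj
  rw [card_eq_of_iff (fun i => i = 1) (by intro i; fin_cases i <;> norm_num [g] <;> decide),
      card_eq_of_iff (fun i => i = 0 ∨ i = 2)
        (by intro i; fin_cases i <;> norm_num [g] <;> decide)]
  decide

lemma wm12 : weakMaj (g 1) (g 2) := by
  unfold weakMaj
  rw [card_eq_of_iff (fun i => i = 2) (by intro i; fin_cases i <;> norm_num [g, Matrix.cons_val_two] <;> decide),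
      card_eq_of_iff (fun i => i = 0 ∨ i = 1)
        (by intro i; fin_cases i <;> norm_num [g, Matrix.cons_val_two] <;> decide)]
  decide

lemma nwm02 : ¬ weakMaj (g 0) (g 2) := by
  unfold weakMaj
  rw [card_eq_of_iff (fun i => i = 1) (by intro i; fin_cases i <;> norm_num [g, Matrix.cons_val_two] <;> decide),
      card_eq_of_iff (fun i => i = 0) (by intro i; fin_cases i <;> norm_num [g, Matrix.cons_val_two] <;> decide)]
  decide

lemma nwm20 : ¬ weakMaj (g 2) (g 0) := by
  unfold weakMaj
  rw [card_eq_of_iff (fun i => i = 0) (by intro i; fin_cases i <;> norm_num [g, Matrix.cons_val_two] <;> decide),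
      card_eq_of_iff (fun i => i = 1) (by intro i; fin_cases i <;> norm_num [g, Matrix.cons_val_two] <;> decide)]
  decide

lemma nwm_refl {d : ℕ} (x : Fin d → ℝ) : ¬ weakMaj x x := by
  unfold weakMaj; omega

lemma real3 : Realizable pathTwo 3 := by
  refine ⟨g, ?_⟩
  intro u v
  fin_cases u <;> fin_cases v <;>
    simp [pathTwo, wm01, wm12, nwm02, nwm20, nwm_refl, wm_asymm wm01, wm_asymm wm12]

end Helpers

/-- The directed path of length two is `ℝ^3`-realizable but not
`ℝ^2`-realizable; its weak majority dimension is three. -/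
theorem stmt_10 :
    Realizable pathTwo 3 ∧ ¬ Realizable pathTwo 2 ∧ wdim pathTwo = 3 := by
  have h3 : 3 ∈ {d : ℕ | Realizable pathTwo d} := real3
  refine ⟨real3, not_real_le2 le_rfl, ?_⟩
  unfold wdim
  apply le_antisymm
  · exact Nat.sInf_le h3
  · apply le_csInf ⟨3, h3⟩
    intro d hd
    by_contra h
    push_neg at h
    interval_cases d <;> exact not_real_le2 (by norm_num) hd
end

section
/- If a digraph D is ℝ^2-realizable, then D does not contain a directed path of length two as an induced subdigraph; that is, there are no three distinct vertices u, v, w of D such that the only arcs of D among u, v, w are (u,v) and (v,w). -/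
lemma wm_le {x y : Fin 2 → ℝ} (h : weakMaj x y) (i : Fin 2) : y i ≤ x i := by
  by_contra hi
  push_neg at hi
  haveI : Nonempty {j : Fin 2 // x j < y j} := ⟨⟨i, hi⟩⟩
  have h' : Nat.card {j : Fin 2 // x j < y j} < Nat.card {j : Fin 2 // y j < x j} := h
  have h1 : 0 < Nat.card {j : Fin 2 // x j < y j} := Nat.card_pos
  have h3 : Nat.card {j : Fin 2 // y j < x j} ≤ Nat.card (Fin 2) :=
    Nat.card_le_card_of_injective Subtype.val Subtype.val_injective
  have h4 : Nat.card (Fin 2) = 2 := by simp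
  have hcard : Nat.card {j : Fin 2 // y j < x j} = Nat.card (Fin 2) := by omega
  have hbij : Function.Bijective (Subtype.val : {j : Fin 2 // y j < x j} → Fin 2) :=
    (Nat.bijective_iff_injective_and_card _).mpr ⟨Subtype.val_injective, hcard⟩
  obtain ⟨⟨j, hj⟩, hji⟩ := hbij.surjective i
  subst hji
  exact absurd hj (not_lt.mpr hi.le)

lemma wm_exists {x y : Fin 2 → ℝ} (h : weakMaj x y) : ∃ i, y i < x i := by
  have h1 : 0 < Nat.card {j : Fin 2 // y j < x j} := by
    exact lt_of_le_of_lt (Nat.zero_le _) h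
  rw [Nat.card_pos_iff] at h1
  obtain ⟨⟨j, hj⟩⟩ := h1.1
  exact ⟨j, hj⟩

/-- An `ℝ^2`-realizable digraph contains no directed path of length two as an
induced subdigraph: there are no three distinct vertices `u, v, w` such that
the only arcs among them are `(u,v)` and `(v,w)`. -/
theorem stmt_12 {V : Type*} (D : WDigraph V) (h : Realizable D 2) :
    ¬ ∃ u v w : V, u ≠ v ∧ v ≠ w ∧ u ≠ w ∧
        D.Adj u v ∧ D.Adj v w ∧ ¬ D.Adj u w ∧ ¬ D.Adj w u := by
  rintro ⟨u, v, w, -, -, -, huv, hvw, huw, -⟩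
  obtain ⟨f, hf⟩ := h
  have hxy := (hf u v).mp huv
  have hyz := (hf v w).mp hvw
  apply huw
  rw [hf u w]
  have hle : ∀ i, f w i ≤ f u i := fun i => le_trans (wm_le hyz i) (wm_le hxy i)
  obtain ⟨i0, hi0⟩ := wm_exists hyz
  have hstrict : f w i0 < f u i0 := lt_of_lt_of_le hi0 (wm_le hxy i0)
  unfold weakMaj
  haveI : IsEmpty {j : Fin 2 // f u j < f w j} :=
    ⟨fun ⟨j, hj⟩ => absurd hj (not_lt.mpr (hle j))⟩
  haveI : Nonempty {j : Fin 2 // f w j < f u j} := ⟨⟨i0, hstrict⟩⟩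
  rw [Nat.card_of_isEmpty]
  exact Nat.card_pos
end

section
/- Let x, y, z ∈ ℝ^3 be such that y ≻ x, z ≻ y, and x and z are incomparable under the weak majority relation. Then {i ∈ {1,2,3} : x_i = y_i} = ∅ and {i ∈ {1,2,3} : y_i = z_i} = ∅. -/
open Classical in
noncomputable def ind (p : Prop) : ℕ := if p then 1 else 0
open Classical in
lemma ind_card3 (P : Fin 3 → Prop) :
    Nat.card {i // P i} = ind (P 0) + ind (P 1) + ind (P 2) := by
  classical
  rw [Nat.card_eq_fintype_card, Fintype.card_subtype, Finset.card_filter,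
    Fin.sum_univ_three]
  simp [ind]

lemma ind_le_one (p : Prop) : ind p ≤ 1 := by unfold ind; split <;> omega

lemma ind_antisymm {a b : ℝ} : ind (a < b) + ind (b < a) ≤ 1 := by
  unfold ind; split <;> split <;> first | omega | linarith

lemma ind_trans1 {a b c : ℝ} : ind (a < b) ≤ ind (c < b) + ind (a < c) := by
  unfold ind; split <;> split <;> split <;> first | omega | linarith

lemma ind_trans2 {a b c : ℝ} : ind (b < c) ≤ ind (b < a) + ind (a < c) := by
  unfold ind; split <;> split <;> split <;> first | omega | linarith

lemma ind_split {a b c : ℝ} : ind (a < c) ≤ ind (a < b) + ind (b < c) := by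
  unfold ind; split <;> split <;> split <;> first | omega | linarith

lemma ind_eq_zero {a b : ℝ} (h : a = b) : ind (a < b) = 0 ∧ ind (b < a) = 0 := by
  subst h; unfold ind; constructor <;> (split <;> first | omega | linarith)

lemma key (x y z : Fin 3 → ℝ)
    (hyx : weakMaj y x) (hzy : weakMaj z y)
    (h1 : ¬ weakMaj x z) (h2 : ¬ weakMaj z x) : ∀ i, x i ≠ y i := by
  classical
  unfold weakMaj at hyx hzy h1 h2
  rw [ind_card3, ind_card3] at hyx hzy h1 h2
  intro i hxy
  have C1 := fun j => @ind_antisymm (x j) (y j)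
  have C2 := fun j => @ind_antisymm (y j) (z j)
  have C3 := fun j => @ind_antisymm (x j) (z j)
  have C4 := fun j => @ind_trans1 (x j) (y j) (z j)
  have C5 := fun j => @ind_trans2 (x j) (y j) (z j)
  have C6 := fun j => @ind_trans1 (z j) (y j) (x j)
  have C7 := fun j => @ind_trans2 (z j) (y j) (x j)
  have C8 := fun j => @ind_split (x j) (y j) (z j)
  have C9 := fun j => @ind_split (z j) (y j) (x j)
  have h3 : i = 0 ∨ i = 1 ∨ i = 2 := by fin_cases i <;> simp
  have A1 := C1 0; have A2 := C2 0; have A3 := C3 0; have A4 := C4 0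
  have A5 := C5 0; have A6 := C6 0; have A7 := C7 0; have A8 := C8 0; have A9 := C9 0
  have B1 := C1 1; have B2 := C2 1; have B3 := C3 1; have B4 := C4 1
  have B5 := C5 1; have B6 := C6 1; have B7 := C7 1; have B8 := C8 1; have B9 := C9 1
  have D1 := C1 2; have D2 := C2 2; have D3 := C3 2; have D4 := C4 2
  have D5 := C5 2; have D6 := C6 2; have D7 := C7 2; have D8 := C8 2; have D9 := C9 2
  rcases h3 with rfl | rfl | rfl <;>
    · obtain ⟨hz1, hz2⟩ := ind_eq_zero hxy
      omega

lemma weakMaj_neg {d : ℕ} (a b : Fin d → ℝ) :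
    weakMaj (fun i => -a i) (fun i => -b i) ↔ weakMaj b a := by
  unfold weakMaj
  simp only [neg_lt_neg_iff]

/-- For `x, y, z ∈ ℝ^3` with `y ≻ x`, `z ≻ y` and `x, z` incomparable,
no coordinate of `x` equals the corresponding coordinate of `y`, and no
coordinate of `y` equals the corresponding coordinate of `z`. -/
theorem stmt_14 (x y z : Fin 3 → ℝ)
    (hyx : weakMaj y x) (hzy : weakMaj z y)
    (hxz : ¬ weakMaj x z ∧ ¬ weakMaj z x) :
    (∀ i, x i ≠ y i) ∧ (∀ i, y i ≠ z i) := by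
  constructor
  · exact key x y z hyx hzy hxz.1 hxz.2
  · intro i
    have := key (fun j => -z j) (fun j => -y j) (fun j => -x j)
      ((weakMaj_neg y z).mpr hzy) ((weakMaj_neg x y).mpr hyx)
      (by rw [weakMaj_neg]; exact hxz.1) (by rw [weakMaj_neg]; exact hxz.2) i
    intro h
    exact this (by simp [h])
end

section
/- For every integer n ≥ 4, there exists an n × 4 matrix A = (a_{ij}) with entries in the positive integers satisfying: (i) a_{ij} ∈ ℕ for all i ∈ [n], j ∈ [4]; (ii) a_{ik} ≠ a_{jk} for all 1 ≤ i < j ≤ n and k ∈ [4]; (iii) there exist distinct j, k ∈ [4] such that a_{nj} = max{a_{lj} : l ∈ [n]} and a_{1k} = min{a_{lk} : l ∈ [n]}; (iv) |{k ∈ [4] : a_{ik} − a_{(i+1)k} > 0}| = 3 for every i ∈ [n], where row index n+1 is identified with row index 1; (v) |{k ∈ [4] : a_{ik} − a_{jk} > 0}| = 2 for all i, j ∈ [n] with |i − j| ≥ 2 and {i, j} ≠ {1, n}. -/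
/- Column functions for the even case -/
private def eA (n i : ℕ) : ℕ := n - i
private def eB (n i : ℕ) : ℕ := i + 2 - 2 * (i % 2)
private def eC (n i : ℕ) : ℕ := if i = 0 then n - 1 else i + 1 - 2 * ((i + 1) % 2)
private def eD (n i : ℕ) : ℕ := if i = 0 then 1 else n - i + 1

/- Column functions for the odd case -/
private def oA (n i : ℕ) : ℕ :=
  if i = 0 then n + 1 else if i = 1 then n else if i = n - 1 then 1 else i + 1 - 2 * (i % 2)
private def oB (n i : ℕ) : ℕ :=
  if i = 0 then 3 else if i = 1 then 1 else if i = n - 2 then 2 else if i = n - 1 then n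
  else n - i + 1
private def oC (n i : ℕ) : ℕ :=
  if i = 0 then n - 2 else if i = n - 2 then n else if i = n - 1 then n - 1
  else i + 1 - 2 * ((i + 1) % 2)
private def oD (n i : ℕ) : ℕ := if i = 0 then 1 else n - i + 1

private def ecol (n i : ℕ) : Fin 4 → ℕ := fun k =>
  if k = 0 then eA n i else if k = 1 then eB n i else if k = 2 then eC n i else eD n i
private def ocol (n i : ℕ) : Fin 4 → ℕ := fun k =>
  if k = 0 then oA n i else if k = 1 then oB n i else if k = 2 then oC n i else oD n i

private lemma card4 (P : Fin 4 → Prop) [DecidablePred P] :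
    Nat.card {k : Fin 4 // P k} =
      (if P 0 then 1 else 0) + (if P 1 then 1 else 0) + (if P 2 then 1 else 0) +
        (if P 3 then 1 else 0) := by
  rw [Nat.card_eq_fintype_card, Fintype.card_subtype, Finset.card_filter, Fin.sum_univ_four]

/- positivity -/
private lemma eA_pos (n i : ℕ) (hn : 4 ≤ n) (hi : i < n) : 0 < eA n i := by
  unfold eA; omega
private lemma eB_pos (n i : ℕ) : 0 < eB n i := by unfold eB; omega
private lemma eC_pos (n i : ℕ) (hn : 4 ≤ n) : 0 < eC n i := by
  unfold eC; split_ifs <;> omega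
private lemma eD_pos (n i : ℕ) (hi : i < n) : 0 < eD n i := by
  unfold eD; split_ifs <;> omega
private lemma oA_pos (n i : ℕ) (hn : 4 ≤ n) (hp : n % 2 = 1) (hi : i < n) : 0 < oA n i := by
  unfold oA; split_ifs <;> omega
private lemma oB_pos (n i : ℕ) (hn : 4 ≤ n) (hi : i < n) : 0 < oB n i := by
  unfold oB; split_ifs <;> omega
private lemma oC_pos (n i : ℕ) (hn : 4 ≤ n) (hp : n % 2 = 1) (hi : i < n) : 0 < oC n i := by
  unfold oC; split_ifs <;> omega
private lemma oD_pos (n i : ℕ) (hi : i < n) : 0 < oD n i := by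
  unfold oD; split_ifs <;> omega

/- injectivity in each column -/
private lemma eA_inj (n i j : ℕ) (hi : i < n) (hj : j < n) (hne : i ≠ j) :
    eA n i ≠ eA n j := by unfold eA; omega
private lemma eB_inj (n i j : ℕ) (hne : i ≠ j) : eB n i ≠ eB n j := by unfold eB; omega
private lemma eC_inj (n i j : ℕ) (hn : 4 ≤ n) (hp : n % 2 = 0) (hi : i < n) (hj : j < n)
    (hne : i ≠ j) : eC n i ≠ eC n j := by unfold eC; split_ifs <;> omega
private lemma eD_inj (n i j : ℕ) (hi : i < n) (hj : j < n) (hne : i ≠ j) :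
    eD n i ≠ eD n j := by unfold eD; split_ifs <;> omega
private lemma oA_inj (n i j : ℕ) (hn : 4 ≤ n) (hp : n % 2 = 1) (hi : i < n) (hj : j < n)
    (hne : i ≠ j) : oA n i ≠ oA n j := by unfold oA; split_ifs <;> omega
private lemma oB_inj (n i j : ℕ) (hn : 4 ≤ n) (hp : n % 2 = 1) (hi : i < n) (hj : j < n)
    (hne : i ≠ j) : oB n i ≠ oB n j := by unfold oB; split_ifs <;> omega
private lemma oC_inj (n i j : ℕ) (hn : 4 ≤ n) (hp : n % 2 = 1) (hi : i < n) (hj : j < n)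
    (hne : i ≠ j) : oC n i ≠ oC n j := by unfold oC; split_ifs <;> omega
private lemma oD_inj (n i j : ℕ) (hi : i < n) (hj : j < n) (hne : i ≠ j) :
    oD n i ≠ oD n j := by unfold oD; split_ifs <;> omega

/- (iii): max / min columns -/
private lemma eC_max (n i : ℕ) (hn : 4 ≤ n) (hp : n % 2 = 0) (hi : i < n) :
    eC n i ≤ eC n (n - 1) := by unfold eC; split_ifs <;> omega
private lemma eD_min (n i : ℕ) (hi : i < n) : eD n 0 ≤ eD n i := by
  unfold eD; split_ifs <;> omega
private lemma oB_max (n i : ℕ) (hn : 4 ≤ n) (hp : n % 2 = 1) (hi : i < n) :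
    oB n i ≤ oB n (n - 1) := by unfold oB; split_ifs <;> omega
private lemma oD_min (n i : ℕ) (hi : i < n) : oD n 0 ≤ oD n i := by
  unfold oD; split_ifs <;> omega

/- row-class value lemmas, even case -/
private lemma erow0 (n i : ℕ) (hn : 4 ≤ n) (hp : n % 2 = 0) (h : i = 0) :
    eA n i = n ∧ eB n i = 2 ∧ eC n i = n - 1 ∧ eD n i = 1 := by
  unfold eA eB eC eD; split_ifs <;> omega
private lemma erowR (n i : ℕ) (hn : 4 ≤ n) (hp : n % 2 = 0) (h : 1 ≤ i) (h' : i < n) :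
    eA n i = n - i ∧ eB n i = i + 2 - 2 * (i % 2) ∧ eC n i = i + 1 - 2 * ((i + 1) % 2) ∧
      eD n i = n - i + 1 := by
  unfold eA eB eC eD; split_ifs <;> omega

/- row-class value lemmas, odd case -/
private lemma orow0 (n i : ℕ) (hn : 4 ≤ n) (hp : n % 2 = 1) (h : i = 0) :
    oA n i = n + 1 ∧ oB n i = 3 ∧ oC n i = n - 2 ∧ oD n i = 1 := by
  unfold oA oB oC oD; split_ifs <;> omega
private lemma orow1 (n i : ℕ) (hn : 4 ≤ n) (hp : n % 2 = 1) (h : i = 1) :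
    oA n i = n ∧ oB n i = 1 ∧ oC n i = 2 ∧ oD n i = n := by
  unfold oA oB oC oD; split_ifs <;> omega
private lemma orow2 (n i : ℕ) (hn : 4 ≤ n) (hp : n % 2 = 1) (h : i = n - 2) :
    oA n i = n - 3 ∧ oB n i = 2 ∧ oC n i = n ∧ oD n i = 3 := by
  unfold oA oB oC oD; split_ifs <;> omega
private lemma orow3 (n i : ℕ) (hn : 4 ≤ n) (hp : n % 2 = 1) (h : i = n - 1) :
    oA n i = 1 ∧ oB n i = n ∧ oC n i = n - 1 ∧ oD n i = 2 := by
  unfold oA oB oC oD; split_ifs <;> omega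
private lemma orowM (n i : ℕ) (hn : 4 ≤ n) (hp : n % 2 = 1) (h : 2 ≤ i) (h' : i ≤ n - 3) :
    oA n i = i + 1 - 2 * (i % 2) ∧ oB n i = n - i + 1 ∧
      oC n i = i + 1 - 2 * ((i + 1) % 2) ∧ oD n i = n - i + 1 := by
  unfold oA oB oC oD; split_ifs <;> omega

/- count lemmas: adjacent pairs (value 3), even case -/
private lemma ecount3 (n i m : ℕ) (hn : 4 ≤ n) (hp : n % 2 = 0) (hi : i < n)
    (hm : (m = i + 1 ∧ i + 1 < n) ∨ (i = n - 1 ∧ m = 0)) :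
    (if eA n m < eA n i then 1 else 0) + (if eB n m < eB n i then 1 else 0) +
      (if eC n m < eC n i then 1 else 0) + (if eD n m < eD n i then 1 else 0) = 3 := by
  rcases hm with ⟨hm, hlt⟩ | ⟨hl, hm⟩
  · subst hm
    rcases Nat.eq_zero_or_pos i with h | h
    · have Hi := erow0 n i hn hp h
      have Hm := erowR n (i + 1) hn hp (by omega) (by omega)
      split_ifs <;> omega
    · have Hi := erowR n i hn hp h (by omega)
      have Hm := erowR n (i + 1) hn hp (by omega) (by omega)
      split_ifs <;> omega
  · subst hm
    have Hi := erowR n i hn hp (by omega) (by omega)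
    have Hm := erow0 n 0 hn hp rfl
    split_ifs <;> omega

/- count lemma: distant pairs (value 2), even case -/
private lemma ecount2 (n i j : ℕ) (hn : 4 ≤ n) (hp : n % 2 = 0) (hi : i < n) (hj : j < n)
    (h2 : 2 ≤ max (i - j) (j - i)) (hA : ¬(i = 0 ∧ j = n - 1)) (hB : ¬(i = n - 1 ∧ j = 0)) :
    (if eA n j < eA n i then 1 else 0) + (if eB n j < eB n i then 1 else 0) +
      (if eC n j < eC n i then 1 else 0) + (if eD n j < eD n i then 1 else 0) = 2 := by
  rcases Nat.eq_zero_or_pos i with h | h <;> rcases Nat.eq_zero_or_pos j with g | g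
  · omega
  · have Hi := erow0 n i hn hp h
    have Hj := erowR n j hn hp g hj
    split_ifs <;> omega
  · have Hi := erowR n i hn hp h hi
    have Hj := erow0 n j hn hp g
    split_ifs <;> omega
  · have Hi := erowR n i hn hp h hi
    have Hj := erowR n j hn hp g hj
    split_ifs <;> omega

/- count lemmas: adjacent pairs (value 3), odd case -/
private lemma ocount3 (n i m : ℕ) (hn : 4 ≤ n) (hp : n % 2 = 1) (hi : i < n)
    (hm : (m = i + 1 ∧ i + 1 < n) ∨ (i = n - 1 ∧ m = 0)) :
    (if oA n m < oA n i then 1 else 0) + (if oB n m < oB n i then 1 else 0) +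
      (if oC n m < oC n i then 1 else 0) + (if oD n m < oD n i then 1 else 0) = 3 := by
  rcases hm with ⟨hm, hlt⟩ | ⟨hl, hm⟩
  · subst hm
    have hc : i = 0 ∨ i = 1 ∨ (2 ≤ i ∧ i ≤ n - 4) ∨ i = n - 3 ∨ i = n - 2 := by omega
    rcases hc with h | h | ⟨h, h'⟩ | h | h
    · have Hi := orow0 n i hn hp h
      have Hm := orow1 n (i + 1) hn hp (by omega)
      split_ifs <;> omega
    · have Hi := orow1 n i hn hp h
      have Hm := orowM n (i + 1) hn hp (by omega) (by omega)
      split_ifs <;> omega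
    · have Hi := orowM n i hn hp h (by omega)
      have Hm := orowM n (i + 1) hn hp (by omega) (by omega)
      split_ifs <;> omega
    · have Hi := orowM n i hn hp (by omega) (by omega)
      have Hm := orow2 n (i + 1) hn hp (by omega)
      split_ifs <;> omega
    · have Hi := orow2 n i hn hp h
      have Hm := orow3 n (i + 1) hn hp (by omega)
      split_ifs <;> omega
  · subst hm
    have Hi := orow3 n i hn hp hl
    have Hm := orow0 n 0 hn hp rfl
    split_ifs <;> omega

/- count lemma: distant pairs (value 2), odd case -/
set_option maxHeartbeats 1000000 in
private lemma ocount2 (n i j : ℕ) (hn : 4 ≤ n) (hp : n % 2 = 1) (hi : i < n) (hj : j < n)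
    (h2 : 2 ≤ max (i - j) (j - i)) (hA : ¬(i = 0 ∧ j = n - 1)) (hB : ¬(i = n - 1 ∧ j = 0)) :
    (if oA n j < oA n i then 1 else 0) + (if oB n j < oB n i then 1 else 0) +
      (if oC n j < oC n i then 1 else 0) + (if oD n j < oD n i then 1 else 0) = 2 := by
  have hci : i = 0 ∨ i = 1 ∨ i = n - 2 ∨ i = n - 1 ∨ (2 ≤ i ∧ i ≤ n - 3) := by omega
  have hcj : j = 0 ∨ j = 1 ∨ j = n - 2 ∨ j = n - 1 ∨ (2 ≤ j ∧ j ≤ n - 3) := by omega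
  rcases hci with h | h | h | h | ⟨h, h'⟩ <;>
    rcases hcj with g | g | g | g | ⟨g, g'⟩ <;>
    (first
      | have Hi := orow0 n i hn hp ‹i = 0›
      | have Hi := orow1 n i hn hp ‹i = 1›
      | have Hi := orow2 n i hn hp ‹i = n - 2›
      | have Hi := orow3 n i hn hp ‹i = n - 1›
      | have Hi := orowM n i hn hp ‹2 ≤ i› ‹i ≤ n - 3›) <;>
    (first
      | have Hj := orow0 n j hn hp ‹j = 0›
      | have Hj := orow1 n j hn hp ‹j = 1›
      | have Hj := orow2 n j hn hp ‹j = n - 2›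
      | have Hj := orow3 n j hn hp ‹j = n - 1›
      | have Hj := orowM n j hn hp ‹2 ≤ j› ‹j ≤ n - 3›) <;>
    split_ifs <;> omega

/-- For every `n ≥ 4` there is an `n × 4` matrix `a` of positive integers
(rows indexed `1, …, n` by `0, …, n-1 : Fin n`) such that:
(ii) entries within each column are pairwise distinct;
(iii) some column `j` attains its maximum at row `n` and some other column `k`
attains its minimum at row `1`;
(iv) each row beats the cyclically next row in exactly `3` of the `4` columns;
(v) row `i` beats row `j` in exactly `2` columns whenever `|i - j| ≥ 2` and
`{i, j} ≠ {1, n}`. -/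
theorem stmt_17 (n : ℕ) (hn : 4 ≤ n) :
    ∃ a : Fin n → Fin 4 → ℕ,
      (∀ i j, 0 < a i j) ∧
      (∀ i j : Fin n, i ≠ j → ∀ k, a i k ≠ a j k) ∧
      (∃ j k : Fin 4, j ≠ k ∧
        (∀ l, a l j ≤ a ⟨n - 1, by omega⟩ j) ∧
        (∀ l, a (⟨0, by omega⟩ : Fin n) k ≤ a l k)) ∧
      (∀ i : Fin n,
        Nat.card {k : Fin 4 //
          a (⟨((i : ℕ) + 1) % n, Nat.mod_lt _ (by omega)⟩ : Fin n) k < a i k} = 3) ∧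
      (∀ i j : Fin n,
        2 ≤ max ((i : ℕ) - (j : ℕ)) ((j : ℕ) - (i : ℕ)) →
        ¬((i : ℕ) = 0 ∧ (j : ℕ) = n - 1) → ¬((i : ℕ) = n - 1 ∧ (j : ℕ) = 0) →
        Nat.card {k : Fin 4 // a j k < a i k} = 2) := by
  rcases Nat.even_or_odd n with hpar | hpar
  · -- even case
    have hp : n % 2 = 0 := Nat.even_iff.mp hpar
    refine ⟨fun i k => ecol n (i : ℕ) k, ?_, ?_, ?_, ?_, ?_⟩
    · intro i k
      fin_cases k
      · exact eA_pos n i hn i.2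
      · exact eB_pos n i
      · exact eC_pos n i hn
      · exact eD_pos n i i.2
    · intro i j hne k
      have hv : (i : ℕ) ≠ (j : ℕ) := fun hh => hne (Fin.ext hh)
      fin_cases k
      · exact eA_inj n i j i.2 j.2 hv
      · exact eB_inj n i j hv
      · exact eC_inj n i j hn hp i.2 j.2 hv
      · exact eD_inj n i j i.2 j.2 hv
    · refine ⟨2, 3, by decide, ?_, ?_⟩
      · intro l
        show eC n (l : ℕ) ≤ eC n (n - 1)
        exact eC_max n l hn hp l.2
      · intro l
        show eD n 0 ≤ eD n (l : ℕ)
        exact eD_min n l l.2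
    · intro i
      have hm : (((i : ℕ) + 1) % n = (i : ℕ) + 1 ∧ (i : ℕ) + 1 < n) ∨
          ((i : ℕ) = n - 1 ∧ ((i : ℕ) + 1) % n = 0) := by
        by_cases h : (i : ℕ) + 1 < n
        · exact Or.inl ⟨Nat.mod_eq_of_lt h, h⟩
        · have h2 : (i : ℕ) + 1 = n := by have := i.2; omega
          exact Or.inr ⟨by omega, by rw [h2, Nat.mod_self]⟩
      rw [card4]
      show (if eA n (((i : ℕ) + 1) % n) < eA n (i : ℕ) then 1 else 0) +
          (if eB n (((i : ℕ) + 1) % n) < eB n (i : ℕ) then 1 else 0) +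
          (if eC n (((i : ℕ) + 1) % n) < eC n (i : ℕ) then 1 else 0) +
          (if eD n (((i : ℕ) + 1) % n) < eD n (i : ℕ) then 1 else 0) = 3
      exact ecount3 n (i : ℕ) (((i : ℕ) + 1) % n) hn hp i.2 hm
    · intro i j h2 hA hB
      rw [card4]
      show (if eA n (j : ℕ) < eA n (i : ℕ) then 1 else 0) +
          (if eB n (j : ℕ) < eB n (i : ℕ) then 1 else 0) +
          (if eC n (j : ℕ) < eC n (i : ℕ) then 1 else 0) +
          (if eD n (j : ℕ) < eD n (i : ℕ) then 1 else 0) = 2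
      exact ecount2 n (i : ℕ) (j : ℕ) hn hp i.2 j.2 h2 hA hB
  · -- odd case
    have hp : n % 2 = 1 := Nat.odd_iff.mp hpar
    refine ⟨fun i k => ocol n (i : ℕ) k, ?_, ?_, ?_, ?_, ?_⟩
    · intro i k
      fin_cases k
      · exact oA_pos n i hn hp i.2
      · exact oB_pos n i hn i.2
      · exact oC_pos n i hn hp i.2
      · exact oD_pos n i i.2
    · intro i j hne k
      have hv : (i : ℕ) ≠ (j : ℕ) := fun hh => hne (Fin.ext hh)
      fin_cases k
      · exact oA_inj n i j hn hp i.2 j.2 hv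
      · exact oB_inj n i j hn hp i.2 j.2 hv
      · exact oC_inj n i j hn hp i.2 j.2 hv
      · exact oD_inj n i j i.2 j.2 hv
    · refine ⟨1, 3, by decide, ?_, ?_⟩
      · intro l
        show oB n (l : ℕ) ≤ oB n (n - 1)
        exact oB_max n l hn hp l.2
      · intro l
        show oD n 0 ≤ oD n (l : ℕ)
        exact oD_min n l l.2
    · intro i
      have hm : (((i : ℕ) + 1) % n = (i : ℕ) + 1 ∧ (i : ℕ) + 1 < n) ∨
          ((i : ℕ) = n - 1 ∧ ((i : ℕ) + 1) % n = 0) := by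
        by_cases h : (i : ℕ) + 1 < n
        · exact Or.inl ⟨Nat.mod_eq_of_lt h, h⟩
        · have h2 : (i : ℕ) + 1 = n := by have := i.2; omega
          exact Or.inr ⟨by omega, by rw [h2, Nat.mod_self]⟩
      rw [card4]
      show (if oA n (((i : ℕ) + 1) % n) < oA n (i : ℕ) then 1 else 0) +
          (if oB n (((i : ℕ) + 1) % n) < oB n (i : ℕ) then 1 else 0) +
          (if oC n (((i : ℕ) + 1) % n) < oC n (i : ℕ) then 1 else 0) +
          (if oD n (((i : ℕ) + 1) % n) < oD n (i : ℕ) then 1 else 0) = 3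
      exact ocount3 n (i : ℕ) (((i : ℕ) + 1) % n) hn hp i.2 hm
    · intro i j h2 hA hB
      rw [card4]
      show (if oA n (j : ℕ) < oA n (i : ℕ) then 1 else 0) +
          (if oB n (j : ℕ) < oB n (i : ℕ) then 1 else 0) +
          (if oC n (j : ℕ) < oC n (i : ℕ) then 1 else 0) +
          (if oD n (j : ℕ) < oD n (i : ℕ) then 1 else 0) = 2
      exact ocount2 n (i : ℕ) (j : ℕ) hn hp i.2 j.2 h2 hA hB
end
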